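/- The global parametrix P^{(∞)}(z) = ∏_{k=0}^{n−1} ((z−r_{k+1})/(z−r_k))^{−ln(1−γ_k)/(2πi) · σ₃} z^{−βσ₃} satisfies, for x ∈ (r_j, r_{j+1}) with 0 < r_j (i.e. on the positive real axis away from division points), the jump relation P^{(∞)}_+(x) = P^{(∞)}_−(x) · diag((1−γ_j)^{−1}, 1−γ_j), where P^{(∞)}_± denote boundary values from the upper/lower half-plane. -/

import Mathlib

open Complex Filter Matrix

/-- The power z^c with the branch of the argument chosen in (−π/2, 3π/2]. -/
noncomputable def branchPow (z c : ℂ) : ℂ :=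
  Complex.exp (c * (Complex.log (z * Complex.exp (-(Real.pi * Complex.I) / 2))
    + Real.pi * Complex.I / 2))

open scoped Real Topology

/-! The parametrix is diagonal, so the jump is checked entry by entry. In each entry only the
factor with index `j` is discontinuous at `x`: there `(z - r_{j+1})/(z - r_j)` maps the upper
(lower) half-plane into itself and tends to a negative real number, so its principal logarithm
tends to `log|·| + πi` from above and `log|·| - πi` from below, and the power `^ a` jumps by
`exp (2πi a)`. The other factors are continuous at `x`, which lies outside their segments, and
`z^{∓β}` is continuous off the closed negative imaginary axis. -/

def HasJumpAt {R : Type*} [TopologicalSpace R] [Mul R] (f : ℂ → R) (x : ℝ) (J : R) : Prop :=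
  ∃ u d, Tendsto f (𝓝[{z | 0 < z.im}] (x : ℂ)) (𝓝 u) ∧
    Tendsto f (𝓝[{z | z.im < 0}] (x : ℂ)) (𝓝 d) ∧ u = d * J

lemma tendsto_add_mul_I_nhdsWithin_upper (x : ℝ) :
    Tendsto (fun ε : ℝ => (x : ℂ) + ε * I) (𝓝[>] 0) (𝓝[{z | 0 < z.im}] (x : ℂ)) := by
  refine tendsto_nhdsWithin_iff.2
    ⟨?_, eventually_mem_nhdsWithin.mono fun ε hε => by simpa using hε⟩
  have h : Continuous fun ε : ℝ => (x : ℂ) + ε * I := by fun_prop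
  simpa using h.continuousWithinAt.tendsto (s := Set.Ioi 0) (x := 0)

lemma tendsto_sub_mul_I_nhdsWithin_lower (x : ℝ) :
    Tendsto (fun ε : ℝ => (x : ℂ) - ε * I) (𝓝[>] 0) (𝓝[{z | z.im < 0}] (x : ℂ)) := by
  refine tendsto_nhdsWithin_iff.2
    ⟨?_, eventually_mem_nhdsWithin.mono fun ε hε => by simpa using hε⟩
  have h : Continuous fun ε : ℝ => (x : ℂ) - ε * I := by fun_prop
  simpa using h.continuousWithinAt.tendsto (s := Set.Ioi 0) (x := 0)

lemma im_div_sub_ofReal_sub_ofReal (z : ℂ) (p q : ℝ) :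
    ((z - q) / (z - p)).im = z.im * (q - p) / normSq (z - p) := by
  simp only [div_im, sub_re, sub_im, ofReal_re, ofReal_im, sub_zero]
  ring

lemma tendsto_div_sub_ofReal_sub_ofReal_upper {p q x : ℝ} (hpq : p < q) (hx : x ≠ p) :
    Tendsto (fun z : ℂ => (z - q) / (z - p)) (𝓝[{z | 0 < z.im}] (x : ℂ))
      (𝓝[{z | 0 < z.im}] (((x : ℂ) - q) / (x - p))) := by
  refine tendsto_nhdsWithin_iff.2 ⟨?_, eventually_mem_nhdsWithin.mono fun z hz => ?_⟩
  · have hxp : (x : ℂ) - p ≠ 0 := sub_ne_zero.2 (ofReal_injective.ne hx)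
    exact ((continuousAt_id.sub continuousAt_const).div
      (continuousAt_id.sub continuousAt_const) hxp).tendsto.mono_left nhdsWithin_le_nhds
  · have hz : 0 < z.im := hz
    have hp : z - p ≠ 0 := fun h => by simp [sub_eq_zero.1 h] at hz
    show 0 < ((z - q) / (z - p)).im
    rw [im_div_sub_ofReal_sub_ofReal]
    exact div_pos (mul_pos hz (sub_pos.2 hpq)) (normSq_pos.2 hp)

lemma tendsto_div_sub_ofReal_sub_ofReal_lower {p q x : ℝ} (hpq : p < q) (hx : x ≠ p) :
    Tendsto (fun z : ℂ => (z - q) / (z - p)) (𝓝[{z | z.im < 0}] (x : ℂ))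
      (𝓝[{z | z.im < 0}] (((x : ℂ) - q) / (x - p))) := by
  refine tendsto_nhdsWithin_iff.2 ⟨?_, eventually_mem_nhdsWithin.mono fun z hz => ?_⟩
  · have hxp : (x : ℂ) - p ≠ 0 := sub_ne_zero.2 (ofReal_injective.ne hx)
    exact ((continuousAt_id.sub continuousAt_const).div
      (continuousAt_id.sub continuousAt_const) hxp).tendsto.mono_left nhdsWithin_le_nhds
  · have hz : z.im < 0 := hz
    have hp : z - p ≠ 0 := fun h => by simp [sub_eq_zero.1 h] at hz
    show ((z - q) / (z - p)).im < 0
    rw [im_div_sub_ofReal_sub_ofReal]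
    exact div_neg_of_neg_of_pos (mul_neg_of_neg_of_pos hz (sub_pos.2 hpq)) (normSq_pos.2 hp)

lemma tendsto_cpow_const_of_tendsto_log {α : Type*} {l : Filter α} {b : α → ℂ} {L : ℂ}
    (hb : ∀ᶠ t in l, b t ≠ 0) (hlog : Tendsto (fun t => log (b t)) l (𝓝 L)) (a : ℂ) :
    Tendsto (fun t => b t ^ a) l (𝓝 (exp (L * a))) :=
  ((continuous_exp.tendsto _).comp (hlog.mul_const a)).congr' <|
    hb.mono fun _ ht => (cpow_def_of_ne_zero ht a).symm

lemma div_sub_ofReal_sub_ofReal_re_neg_im_eq_zero {p q x : ℝ} (hp : p < x) (hq : x < q) :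
    (((x : ℂ) - q) / (x - p)).re < 0 ∧ (((x : ℂ) - q) / (x - p)).im = 0 := by
  rw [← ofReal_sub, ← ofReal_sub, ← ofReal_div, ofReal_re, ofReal_im]
  exact ⟨div_neg_of_neg_of_pos (by linarith) (by linarith), rfl⟩

lemma tendsto_cpow_div_sub_ofReal_sub_ofReal_upper {p q x : ℝ} (hp : p < x) (hq : x < q)
    (a : ℂ) : Tendsto (fun z : ℂ => ((z - q) / (z - p)) ^ a) (𝓝[{z | 0 < z.im}] (x : ℂ))
      (𝓝 (exp ((Real.log ‖((x : ℂ) - q) / (x - p)‖ + π * I) * a))) := by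
  have hb := tendsto_div_sub_ofReal_sub_ofReal_upper (hp.trans hq) hp.ne'
  obtain ⟨hre, him⟩ := div_sub_ofReal_sub_ofReal_re_neg_im_eq_zero hp hq
  refine tendsto_cpow_const_of_tendsto_log ?_ ?_ a
  · exact (hb.eventually self_mem_nhdsWithin).mono fun z hz h => by simp [h] at hz
  · exact ((tendsto_log_nhdsWithin_im_nonneg_of_re_neg_of_im_zero hre him).mono_left
      (nhdsWithin_mono _ fun z (hz : 0 < z.im) => hz.le)).comp hb

lemma tendsto_cpow_div_sub_ofReal_sub_ofReal_lower {p q x : ℝ} (hp : p < x) (hq : x < q)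
    (a : ℂ) : Tendsto (fun z : ℂ => ((z - q) / (z - p)) ^ a) (𝓝[{z | z.im < 0}] (x : ℂ))
      (𝓝 (exp ((Real.log ‖((x : ℂ) - q) / (x - p)‖ - π * I) * a))) := by
  have hb := tendsto_div_sub_ofReal_sub_ofReal_lower (hp.trans hq) hp.ne'
  obtain ⟨hre, him⟩ := div_sub_ofReal_sub_ofReal_re_neg_im_eq_zero hp hq
  refine tendsto_cpow_const_of_tendsto_log ?_ ?_ a
  · exact (hb.eventually self_mem_nhdsWithin).mono fun z hz h => by simp [h] at hz
  · exact (tendsto_log_nhdsWithin_im_neg_of_re_neg_of_im_zero hre him).comp hb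

lemma hasJumpAt_cpow_div_sub_ofReal_sub_ofReal {p q x : ℝ} (hp : p < x) (hq : x < q) (a : ℂ) :
    HasJumpAt (fun z : ℂ => ((z - q) / (z - p)) ^ a) x (exp (2 * π * I * a)) :=
  ⟨_, _, tendsto_cpow_div_sub_ofReal_sub_ofReal_upper hp hq a,
    tendsto_cpow_div_sub_ofReal_sub_ofReal_lower hp hq a, by rw [← exp_add]; ring_nf⟩

lemma HasJumpAt.mul_continuousAt {f g : ℂ → ℂ} {x : ℝ} {J : ℂ} (hf : HasJumpAt f x J)
    (hg : ContinuousAt g x) : HasJumpAt (fun z => f z * g z) x J := by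
  obtain ⟨u, d, hu, hd, hJ⟩ := hf
  exact ⟨u * g x, d * g x, hu.mul (hg.tendsto.mono_left nhdsWithin_le_nhds),
    hd.mul (hg.tendsto.mono_left nhdsWithin_le_nhds), by rw [hJ]; ring⟩

lemma continuousAt_branchPow {z : ℂ} (hz : 0 < z.im ∨ z.re ≠ 0) (c : ℂ) :
    ContinuousAt (fun w => branchPow w c) z := by
  have hrot : exp (-(π * I) / 2) = -I := by rw [← exp_neg_pi_div_two_mul_I]; ring_nf
  have hslit : z * exp (-(π * I) / 2) ∈ slitPlane := by
    rw [hrot, mem_slitPlane_iff]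
    simpa using hz
  unfold branchPow
  exact continuous_exp.continuousAt.comp
    (continuousAt_const.mul (((continuousAt_id.mul continuousAt_const).clog hslit).add
      continuousAt_const))

lemma continuousAt_cpow_div_sub_sub {z p q : ℂ} (hz : (z - q) / (z - p) ∈ slitPlane) (a : ℂ) :
    ContinuousAt (fun w => ((w - q) / (w - p)) ^ a) z := by
  have hp : z - p ≠ 0 := fun h => slitPlane_ne_zero hz (by rw [h, div_zero])
  have hbase : ContinuousAt (fun w => (w - q) / (w - p)) z :=
    (continuousAt_id.sub continuousAt_const).div (continuousAt_id.sub continuousAt_const) hp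
  exact hbase.cpow continuousAt_const hz

lemma div_sub_sub_pos_of_ne {r : ℕ → ℝ} {n j k : ℕ} (hr : StrictMonoOn r (Set.Iic n))
    (hj : j < n) (hk : k < n) (hkj : k ≠ j) {x : ℝ} (hx : x ∈ Set.Ioo (r j) (r (j + 1))) :
    0 < (x - r (k + 1)) / (x - r k) := by
  have hlt : r k < r (k + 1) := hr (by simp; omega) (by simp; omega) (by omega)
  rcases lt_or_gt_of_ne hkj with hkj | hkj
  · have : r (k + 1) ≤ r j := hr.monotoneOn (by simp; omega) (by simp; omega) (by omega)
    exact div_pos (by linarith [hx.1]) (by linarith [hx.1])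
  · have : r (j + 1) ≤ r k := hr.monotoneOn (by simp; omega) (by simp; omega) (by omega)
    exact div_pos_of_neg_of_neg (by linarith [hx.2]) (by linarith [hx.2])

noncomputable def parametrixEntry (n : ℕ) (r : ℕ → ℝ) (a : ℕ → ℂ) (c z : ℂ) : ℂ :=
  (∏ k ∈ Finset.range n, ((z - r (k + 1)) / (z - r k)) ^ a k) * branchPow z c

lemma hasJumpAt_parametrixEntry {n j : ℕ} {r : ℕ → ℝ} (hr : StrictMonoOn r (Set.Iic n))
    (hj : j < n) {x : ℝ} (hx : x ∈ Set.Ioo (r j) (r (j + 1))) (hx0 : x ≠ 0)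
    (a : ℕ → ℂ) (c : ℂ) :
    HasJumpAt (parametrixEntry n r a c) x (exp (2 * π * I * a j)) := by
  set factor : ℕ → ℂ → ℂ := fun k z => ((z - r (k + 1)) / (z - r k)) ^ a k
  have hsplit : parametrixEntry n r a c =
      fun z => factor j z * ((∏ k ∈ (Finset.range n).erase j, factor k z) * branchPow z c) := by
    funext z
    rw [← mul_assoc, Finset.mul_prod_erase _ (fun k => factor k z) (Finset.mem_range.2 hj)]
    rfl
  have hcont : ContinuousAt (fun z => (∏ k ∈ (Finset.range n).erase j, factor k z) *
      branchPow z c) x := by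
    refine ContinuousAt.mul (tendsto_finsetProd _ fun k hk => ?_) (continuousAt_branchPow ?_ c)
    · obtain ⟨hkj, hk⟩ := Finset.mem_erase.1 hk
      have hpos := div_sub_sub_pos_of_ne hr hj (Finset.mem_range.1 hk) hkj hx
      refine continuousAt_cpow_div_sub_sub ?_ (a k)
      exact_mod_cast ofReal_mem_slitPlane.2 hpos
    · simpa using hx0
  rw [hsplit]
  exact (hasJumpAt_cpow_div_sub_ofReal_sub_ofReal hx.1 hx.2 (a j)).mul_continuousAt hcont

lemma HasJumpAt.matrix_diagonal {ι R : Type*} [Fintype ι] [DecidableEq ι] [Semiring R]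
    [TopologicalSpace R] {f : ι → ℂ → R} {x : ℝ} {J : ι → R}
    (hf : ∀ i, HasJumpAt (f i) x (J i)) :
    HasJumpAt (fun z => diagonal fun i => f i z) x (diagonal J) := by
  choose u d hu hd hJ using hf
  have hdiag := (continuous_id (X := ι → R)).matrix_diagonal.tendsto
  refine ⟨diagonal u, diagonal d, (hdiag u).comp (tendsto_pi_nhds.2 hu),
    (hdiag d).comp (tendsto_pi_nhds.2 hd), ?_⟩
  rw [diagonal_mul_diagonal]
  exact congrArg diagonal (funext hJ)

lemma exp_two_pi_I_mul_div (u : ℂ) : exp (2 * π * I * (u / (2 * π * I))) = exp u := by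
  rw [mul_div_cancel₀ _ two_pi_I_ne_zero]

theorem global_parametrix_jump_general (n : ℕ)
    (r : ℕ → ℝ) (hr : ∀ k < n, r k < r (k + 1))
    (γ : ℕ → ℝ) (hγ : ∀ k < n, 0 ≤ γ k ∧ γ k < 1)
    (β : ℂ)
    (Pinf : ℂ → Matrix (Fin 2) (Fin 2) ℂ)
    (hP : ∀ z : ℂ, Pinf z = Matrix.diagonal
      ![(∏ k ∈ Finset.range n,
            ((z - (r (k + 1) : ℂ)) / (z - (r k : ℂ))) ^
              (-(Real.log (1 - γ k) : ℂ) / (2 * Real.pi * Complex.I))) * branchPow z (-β),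
        (∏ k ∈ Finset.range n,
            ((z - (r (k + 1) : ℂ)) / (z - (r k : ℂ))) ^
              ((Real.log (1 - γ k) : ℂ) / (2 * Real.pi * Complex.I))) * branchPow z β])
    (j : ℕ) (hj : j < n) (hrj : 0 < r j)
    (x : ℝ) (hx : x ∈ Set.Ioo (r j) (r (j + 1))) :
    ∃ Pp Pm : Matrix (Fin 2) (Fin 2) ℂ,
      Tendsto (fun ε : ℝ => Pinf ((x : ℂ) + ε * Complex.I))
        (nhdsWithin 0 (Set.Ioi 0)) (nhds Pp) ∧
      Tendsto (fun ε : ℝ => Pinf ((x : ℂ) - ε * Complex.I))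
        (nhdsWithin 0 (Set.Ioi 0)) (nhds Pm) ∧
      Pp = Pm * Matrix.diagonal ![((1 - γ j : ℝ) : ℂ)⁻¹, ((1 - γ j : ℝ) : ℂ)] := by
  have hmono : StrictMonoOn r (Set.Iic n) := strictMonoOn_Iic_of_lt_succ fun k hk => by
    simpa using hr k hk
  have hγj : 0 < 1 - γ j := by linarith [(hγ j hj).2]
  have hentry := fun a c => hasJumpAt_parametrixEntry hmono hj hx (hrj.trans hx.1).ne' a c
  have hPdiag : Pinf = fun z => diagonal fun i =>
      ![parametrixEntry n r (fun k => -(Real.log (1 - γ k) : ℂ) / (2 * π * I)) (-β),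
        parametrixEntry n r (fun k => (Real.log (1 - γ k) : ℂ) / (2 * π * I)) β] i z := by
    funext z
    rw [hP]
    congr 1
    ext i
    fin_cases i <;> rfl
  have hjump :
      HasJumpAt Pinf x (diagonal ![((1 - γ j : ℝ) : ℂ)⁻¹, ((1 - γ j : ℝ) : ℂ)]) := by
    rw [hPdiag]
    refine HasJumpAt.matrix_diagonal (Fin.forall_fin_two.2 ⟨?_, ?_⟩)
    · have hexp : exp (2 * π * I * (-(Real.log (1 - γ j) : ℂ) / (2 * π * I))) =
          ((1 - γ j : ℝ) : ℂ)⁻¹ := by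
        rw [exp_two_pi_I_mul_div, exp_neg, ← ofReal_exp, Real.exp_log hγj]
      exact hexp ▸ hentry _ (-β)
    · have hexp : exp (2 * π * I * ((Real.log (1 - γ j) : ℂ) / (2 * π * I))) =
          ((1 - γ j : ℝ) : ℂ) := by
        rw [exp_two_pi_I_mul_div, ← ofReal_exp, Real.exp_log hγj]
      exact hexp ▸ hentry _ β
  obtain ⟨Pp, Pm, hPp, hPm, hPpm⟩ := hjump
  exact ⟨Pp, Pm, hPp.comp (tendsto_add_mul_I_nhdsWithin_upper x),
    hPm.comp (tendsto_sub_mul_I_nhdsWithin_lower x), hPpm⟩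

/-- The global parametrix
P^{(∞)}(z) = ∏_{k} ((z−r_{k+1})/(z−r_k))^{−ln(1−γ_k)σ₃/(2πi)} z^{−βσ₃} (a diagonal matrix)
satisfies the jump P^{(∞)}_+(x) = P^{(∞)}_−(x) diag((1−γ_j)⁻¹, 1−γ_j) on (r_j, r_{j+1})
with r_j > 0. -/
theorem global_parametrix_jump (n m : ℕ) (hn : 1 ≤ n) (hmn : m ≤ n)
    (r : ℕ → ℝ) (hr : ∀ k < n, r k < r (k + 1)) (hrm : r m = 0)
    (γ : ℕ → ℝ) (hγ : ∀ k < n, 0 ≤ γ k ∧ γ k < 1)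
    (β : ℂ) (hβ : β.re = 0)
    (Pinf : ℂ → Matrix (Fin 2) (Fin 2) ℂ)
    (hP : ∀ z : ℂ, Pinf z = Matrix.diagonal
      ![(∏ k ∈ Finset.range n,
            ((z - (r (k + 1) : ℂ)) / (z - (r k : ℂ))) ^
              (-(Real.log (1 - γ k) : ℂ) / (2 * Real.pi * Complex.I))) * branchPow z (-β),
        (∏ k ∈ Finset.range n,
            ((z - (r (k + 1) : ℂ)) / (z - (r k : ℂ))) ^
              ((Real.log (1 - γ k) : ℂ) / (2 * Real.pi * Complex.I))) * branchPow z β])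
    (j : ℕ) (hj : j < n) (hrj : 0 < r j)
    (x : ℝ) (hx : x ∈ Set.Ioo (r j) (r (j + 1))) :
    ∃ Pp Pm : Matrix (Fin 2) (Fin 2) ℂ,
      Tendsto (fun ε : ℝ => Pinf ((x : ℂ) + ε * Complex.I))
        (nhdsWithin 0 (Set.Ioi 0)) (nhds Pp) ∧
      Tendsto (fun ε : ℝ => Pinf ((x : ℂ) - ε * Complex.I))
        (nhdsWithin 0 (Set.Ioi 0)) (nhds Pm) ∧
      Pp = Pm * Matrix.diagonal ![((1 - γ j : ℝ) : ℂ)⁻¹, ((1 - γ j : ℝ) : ℂ)] :=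
  global_parametrix_jump_general n r hr γ hγ β Pinf hP j hj hrj x hx
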